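/- arXiv:1204.0480 — 2 statements merged into one kernel-verified Lean document; each statement's English description precedes it below -/
import Mathlib

section
/- If a message t originates at index i in a trace c, and σ is a substitution such that σ(t) originates somewhere in the trace σ ∘ c (σ applied eventwise), then σ(t) originates in σ ∘ c at an index j ≤ i. -/
/-- Messages over a set of variables: variables (atoms), pairing, encryption. -/
inductive Msg (V : Type) : Type
  | var : V → Msg V
  | pair : Msg V → Msg V → Msg V
  | enc : Msg V → Msg V → Msg V

/-- Homomorphic extension of a substitution. -/
def subst {V W : Type} (σ : V → Msg W) : Msg V → Msg W
  | .var v => σ v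
  | .pair a b => .pair (subst σ a) (subst σ b)
  | .enc a b => .enc (subst σ a) (subst σ b)

/-- A message-algebra homomorphism commutes with pairing and encryption. -/
def IsMsgHom {V W : Type} (σ : Msg V → Msg W) : Prop :=
  (∀ a b, σ (.pair a b) = .pair (σ a) (σ b)) ∧
  (∀ a b, σ (.enc a b) = .enc (σ a) (σ b))

/-- The carried-by relation. -/
inductive Carries {V : Type} : Msg V → Msg V → Prop
  | refl (t : Msg V) : Carries t t
  | pairL (t₀ t₁ : Msg V) : Carries t₀ (Msg.pair t₀ t₁)
  | pairR (t₀ t₁ : Msg V) : Carries t₁ (Msg.pair t₀ t₁)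
  | enc (t₀ t₁ : Msg V) : Carries t₀ (Msg.enc t₀ t₁)
  | trans {t₀ t₁ t₂ : Msg V} : Carries t₀ t₁ → Carries t₁ t₂ → Carries t₀ t₂

/-- Events: transmission or reception of a message. -/
inductive Event (V : Type) : Type
  | send : Msg V → Event V
  | recv : Msg V → Event V

/-- The message of an event. -/
def Event.msg {V : Type} : Event V → Msg V
  | .send m => m
  | .recv m => m

/-- Apply a message map to an event, preserving the sign. -/
def Event.map {V W : Type} (σ : Msg V → Msg W) : Event V → Event W
  | .send m => .send (σ m)
  | .recv m => .recv (σ m)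

/-- A skeleton: a strand space (strands `s < numStrands`, each with a trace of
length `height s` whose events are given by `evt`), a node ordering `prec`,
non-originating atoms `nonOrig` and uniquely-originating atoms `uniq`. -/
structure Skeleton (V : Type) where
  numStrands : ℕ
  height : ℕ → ℕ
  evt : ℕ × ℕ → Event V
  prec : ℕ × ℕ → ℕ × ℕ → Prop
  nonOrig : Set (Msg V)
  uniq : Set (Msg V)

/-- Nodes of a skeleton. -/
def Skeleton.IsNode {V : Type} (k : Skeleton V) (n : ℕ × ℕ) : Prop :=
  n.1 < k.numStrands ∧ n.2 < k.height n.1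

/-- `t` originates at node `n`: the event at `n` is a transmission carrying
`t`, and `t` is not carried by the message of any earlier event of the
strand. -/
def Skeleton.OrigAt {V : Type} (k : Skeleton V) (t : Msg V) (n : ℕ × ℕ) : Prop :=
  k.IsNode n ∧ (∃ m, k.evt n = .send m ∧ Carries t m) ∧
    ∀ j < n.2, ¬ Carries t (k.evt (n.1, j)).msg

/-- A skeleton homomorphism `(φ, σ) : k₀ → k₁`. -/
structure SkelHom {V W : Type} (k₀ : Skeleton V) (k₁ : Skeleton W)
    (φ : ℕ → ℕ) (σ : Msg V → Msg W) : Prop where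
  msgHom : IsMsgHom σ
  strands : ∀ s < k₀.numStrands, φ s < k₁.numStrands ∧ k₀.height s ≤ k₁.height (φ s)
  events : ∀ n, k₀.IsNode n → (k₀.evt n).map σ = k₁.evt (φ n.1, n.2)
  prec : ∀ n m, k₀.prec n m → k₁.prec (φ n.1, n.2) (φ m.1, m.2)
  non : ∀ t ∈ k₀.nonOrig, σ t ∈ k₁.nonOrig
  uniq : ∀ t ∈ k₀.uniq, σ t ∈ k₁.uniq
  orig : ∀ t ∈ k₀.uniq, ∀ n, k₀.OrigAt t n → k₁.OrigAt (σ t) (φ n.1, n.2)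

instance {V : Type} [Inhabited V] : Inhabited (Msg V) := ⟨.var default⟩
instance {V : Type} [Inhabited V] : Inhabited (Event V) := ⟨.send default⟩

/-- `t` originates in trace `c` at index `i`: the event `c(i)` is a
transmission carrying `t`, and `t` is not carried by the message of any
earlier event. -/
def OrigInTraceAt {V : Type} [Inhabited V] (t : Msg V) (c : List (Event V))
    (i : ℕ) : Prop :=
  i < c.length ∧ (∃ m, c.getD i default = .send m ∧ Carries t m) ∧
    ∀ j < i, ¬ Carries t (c.getD j default).msg


lemma carries_map {V W : Type} (σ : Msg V → Msg W) (hσ : IsMsgHom σ)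
    {a b : Msg V} (h : Carries a b) : Carries (σ a) (σ b) := by
  induction h with
  | refl t => exact .refl _
  | pairL t₀ t₁ => rw [hσ.1]; exact .pairL _ _
  | pairR t₀ t₁ => rw [hσ.1]; exact .pairR _ _
  | enc t₀ t₁ => rw [hσ.2]; exact .enc _ _
  | trans _ _ ih₁ ih₂ => exact .trans ih₁ ih₂

theorem orig_subst_le {V W : Type} [Inhabited V] [Inhabited W]
    (σ : Msg V → Msg W) (hσ : IsMsgHom σ) (t : Msg V) (c : List (Event V))
    (i : ℕ) (hi : OrigInTraceAt t c i)
    (hex : ∃ j, OrigInTraceAt (σ t) (c.map (Event.map σ)) j) :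
    ∃ j ≤ i, OrigInTraceAt (σ t) (c.map (Event.map σ)) j := by
  obtain ⟨j, hj⟩ := hex
  refine ⟨j, ?_, hj⟩
  by_contra h
  push_neg at h
  obtain ⟨hil, ⟨m, hm, hcm⟩, _⟩ := hi
  apply hj.2.2 i h
  have : (c.map (Event.map σ)).getD i default = (c.getD i default).map σ := by
    rw [List.getD_eq_getElem?_getD, List.getD_eq_getElem?_getD,
      List.getElem?_map, List.getElem?_eq_getElem hil]
    rfl
  rw [this, hm]
  exact carries_map σ hσ hcm
end

section
/- Satisfaction of atomic skeleton formulas is preserved by homomorphisms: if Φ is a conjunction of atomic formulas (strand progress predicates, prec, non, uniq, orig, equality), k₀, α ⊨ Φ, and (φ,σ): k₀ → k₁ is a skeleton homomorphism, then k₁, β ⊨ Φ where β maps strand variables via φ ∘ α and message variables via σ ∘ α. -/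
/-- A role is a trace over role variables (natural numbers). -/
abbrev Role : Type := List (Event ℕ)

/-- Semantics of the strand progress predicate `P[r,h,x](s, m)`:
strand `s` exists, has height at least `h`, and its length-`h` prefix is an
instance of `r|h` under a substitution sending `x` to `m`. -/
def SatProgress {W : Type} (k : Skeleton W) (r : Role) (h x : ℕ)
    (s : ℕ) (m : Msg W) : Prop :=
  s < k.numStrands ∧ h ≤ k.height s ∧
    ∃ τ : ℕ → Msg W, τ x = m ∧
      ∀ i < h, k.evt (s, i) = (r.getD i default).map (subst τ)

/-- Atomic formulas of the language: strand progress predicates, `prec`,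
`non`, `uniq`, `orig`, equality and falsehood.  Strand variables are
naturals; message terms are messages over message variables `MV`. -/
inductive Atom (MV : Type) : Type
  | progress (r : Role) (h x : ℕ) (z : ℕ) (t : Msg MV)
  | prec (z i z' i' : ℕ)
  | non (t : Msg MV)
  | uniq (t : Msg MV)
  | orig (t : Msg MV) (z i : ℕ)
  | eq (t u : Msg MV)
  | ff

/-- Satisfaction of an atomic formula in skeleton `k` under strand-variable
assignment `αs` and message-variable assignment `αm`. -/
def SatAtom {MV W : Type} (k : Skeleton W) (αs : ℕ → ℕ) (αm : MV → Msg W) :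
    Atom MV → Prop
  | .progress r h x z t => SatProgress k r h x (αs z) (subst αm t)
  | .prec z i z' i' => k.prec (αs z, i) (αs z', i')
  | .non t => subst αm t ∈ k.nonOrig
  | .uniq t => subst αm t ∈ k.uniq
  | .orig t z i => subst αm t ∈ k.uniq ∧ k.OrigAt (subst αm t) (αs z, i)
  | .eq t u => subst αm t = subst αm u
  | .ff => False


lemma subst_comp_hom {U V W : Type} {σ : Msg V → Msg W} (hσ : IsMsgHom σ)
    (τ : U → Msg V) (m : Msg U) :
    subst (fun n => σ (τ n)) m = σ (subst τ m) := by
  induction m with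
  | var v => rfl
  | pair a b ha hb => simp [subst, ha, hb, (hσ.1 _ _).symm]
  | enc a b ha hb => simp [subst, ha, hb, (hσ.2 _ _).symm]

theorem skelHom_preserves_sat {MV V W : Type} (Φ : List (Atom MV))
    (k₀ : Skeleton V) (k₁ : Skeleton W) (φ : ℕ → ℕ) (σ : Msg V → Msg W)
    (αs : ℕ → ℕ) (αm : MV → Msg V)
    (hhom : SkelHom k₀ k₁ φ σ)
    (hsat : ∀ a ∈ Φ, SatAtom k₀ αs αm a) :
    ∀ a ∈ Φ, SatAtom k₁ (φ ∘ αs) (fun v => σ (αm v)) a := by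
  intro a ha
  have hs := hsat a ha
  cases a with
  | progress r h x z t =>
      obtain ⟨h1, h2, τ, hτx, hτ⟩ := hs
      obtain ⟨hφ1, hφ2⟩ := hhom.strands _ h1
      refine ⟨hφ1, le_trans h2 hφ2, fun n => σ (τ n), ?_, ?_⟩
      · show σ (τ x) = _
        rw [hτx, ← subst_comp_hom hhom.msgHom]
      · intro i hi
        have hnode : k₀.IsNode (αs z, i) := ⟨h1, lt_of_lt_of_le hi h2⟩
        have heq := hhom.events _ hnode
        simp only [Function.comp] at heq ⊢
        rw [← heq, hτ i hi]
        cases r.getD i default with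
        | send m => simp [Event.map, subst_comp_hom hhom.msgHom]
        | recv m => simp [Event.map, subst_comp_hom hhom.msgHom]
  | prec z i z' i' => exact hhom.prec _ _ hs
  | non t =>
      simpa [SatAtom, subst_comp_hom hhom.msgHom] using hhom.non _ hs
  | uniq t =>
      simpa [SatAtom, subst_comp_hom hhom.msgHom] using hhom.uniq _ hs
  | orig t z i =>
      refine ⟨?_, ?_⟩
      · simpa [subst_comp_hom hhom.msgHom] using hhom.uniq _ hs.1
      · simpa [subst_comp_hom hhom.msgHom] using hhom.orig _ hs.1 _ hs.2
  | eq t u =>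
      show subst _ t = subst _ u
      rw [subst_comp_hom hhom.msgHom, subst_comp_hom hhom.msgHom, hs]
  | ff => exact hs
end
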